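/- Let D be an n×k real data matrix, λ > 0, and y_i the i-th standard basis vector in R^n. Let c_i = (DᵀD + λI_k)⁻¹ Dᵀ y_i be the ridge regression solution with labels y_i. Then for any weight w_i > 0, the weighted ridge regression solution θ_i satisfying (DᵀD + w_i·d_i d_iᵀ + λI_k) θ_i = (1 + w_i) d_i, where d_i = Dᵀ y_i is the i-th row of D viewed as a column vector, equals q·c_i for the scalar q = (1 + w_i)/(1 + w_i · d_iᵀ c_i). In particular, the weighted solution has the same direction as the unweighted one. -/

import Mathlib

open Matrix

lemma vmv_mulVec {k : ℕ} (d x : Fin k → ℝ) :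
    vecMulVec d d *ᵥ x = (d ⬝ᵥ x) • d := by
  ext a
  simp only [vecMulVec, mulVec, of_apply, dotProduct, Pi.smul_apply, smul_eq_mul,
    Finset.sum_mul]
  exact Finset.sum_congr rfl fun j _ => by ring

lemma smul_one_posDef {k : ℕ} {lam : ℝ} (hlam : 0 < lam) :
    (lam • (1 : Matrix (Fin k) (Fin k) ℝ)).PosDef := by
  refine Matrix.PosDef.of_dotProduct_mulVec_pos ?_ fun x hx => ?_
  · ext a b
    simp [Matrix.conjTranspose, Matrix.one_apply, eq_comm]
  · have hxx : 0 < x ⬝ᵥ x := by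
      have := Matrix.dotProduct_star_self_pos_iff (v := x) |>.2 hx
      simpa using this
    simpa [Matrix.smul_mulVec] using mul_pos hlam hxx

lemma vmv_posSemidef {k : ℕ} {w : ℝ} (hw : 0 ≤ w) (d : Fin k → ℝ) :
    (w • vecMulVec d d).PosSemidef := by
  refine Matrix.PosSemidef.of_dotProduct_mulVec_nonneg ?_ fun x => ?_
  · ext a b
    simp [Matrix.conjTranspose, vecMulVec, mul_comm]
  · have : (star x) ⬝ᵥ ((w • vecMulVec d d) *ᵥ x) = w * (d ⬝ᵥ x) ^ 2 := by
      rw [Matrix.smul_mulVec, vmv_mulVec]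
      simp only [show star x = x from rfl, dotProduct_smul, smul_eq_mul]
      rw [dotProduct_comm x d]
      ring
    rw [this]
    positivity

theorem weighted_ridge_is_rescaled
    (n k : ℕ) (D : Matrix (Fin n) (Fin k) ℝ) (lam : ℝ) (hlam : 0 < lam)
    (i : Fin n) (w : ℝ) (hw : 0 < w)
    (d : Fin k → ℝ) (hd : d = Dᵀ *ᵥ Pi.single i 1)
    (c : Fin k → ℝ)
    (hc : c = (Dᵀ * D + lam • (1 : Matrix (Fin k) (Fin k) ℝ))⁻¹ *ᵥ (Dᵀ *ᵥ Pi.single i 1))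
    (θ : Fin k → ℝ)
    (hθ : (Dᵀ * D + w • vecMulVec d d + lam • (1 : Matrix (Fin k) (Fin k) ℝ)) *ᵥ θ
          = (1 + w) • d) :
    θ = ((1 + w) / (1 + w * (d ⬝ᵥ c))) • c := by
  set A : Matrix (Fin k) (Fin k) ℝ := Dᵀ * D + lam • (1 : Matrix (Fin k) (Fin k) ℝ) with hA
  have hDtD : (Dᵀ * D).PosSemidef := by
    have := Matrix.posSemidef_conjTranspose_mul_self D
    simpa using this
  have hApd : A.PosDef := Matrix.PosDef.posSemidef_add hDtD (smul_one_posDef hlam)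
  have hAunit : IsUnit A.det := hApd.isUnit.map Matrix.detMonoidHom
  have hAc : A *ᵥ c = d := by
    rw [hc, hd, Matrix.mulVec_mulVec, Matrix.mul_nonsing_inv _ hAunit, Matrix.one_mulVec]
  have hdc : 0 ≤ d ⬝ᵥ c := by
    rcases eq_or_ne d 0 with h0 | h0
    · simp [h0]
    · have hcne : c ≠ 0 := by
        intro hc0
        rw [hc0, Matrix.mulVec_zero] at hAc
        exact h0 hAc.symm
      have := hApd.dotProduct_mulVec_pos hcne
      rw [show star c = c from rfl, hAc] at this
      exact le_of_lt (by rwa [dotProduct_comm] at this)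
  have hden : 0 < 1 + w * (d ⬝ᵥ c) := by positivity
  set q : ℝ := (1 + w) / (1 + w * (d ⬝ᵥ c)) with hq
  set B : Matrix (Fin k) (Fin k) ℝ :=
    Dᵀ * D + w • vecMulVec d d + lam • (1 : Matrix (Fin k) (Fin k) ℝ) with hB
  have hBA : B = A + w • vecMulVec d d := by rw [hB, hA]; abel
  have hBpd : B.PosDef := by
    rw [hBA]
    exact hApd.add_posSemidef (vmv_posSemidef hw.le d)
  have hBq : B *ᵥ (q • c) = (1 + w) • d := by
    rw [hBA, Matrix.mulVec_smul, Matrix.add_mulVec, hAc, Matrix.smul_mulVec, vmv_mulVec]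
    ext a
    simp only [Pi.smul_apply, Pi.add_apply, smul_eq_mul, hq]
    field_simp
  have hinj : Function.Injective (B.mulVec) :=
    Matrix.mulVec_injective_iff_isUnit.mpr hBpd.isUnit
  exact hinj (by rw [hθ, hBq])
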